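/- Let ρ be a positive C¹ function on ℝ₊^{n+1} such that y·|∇ρ(z)| ≤ ρ(z) for every z ∈ ℝ₊^{n+1} and lim_{y→0⁺} ρ(x,y)/y = 1 for every x ∈ ℝⁿ. Then ρ(x,y) ≤ y for all (x,y) ∈ ℝ₊^{n+1}. -/

import Mathlib

open MeasureTheory Filter Set Topology
open scoped ENNReal NNReal

noncomputable section

/-- The Euclidean space `ℝ^{n+1}`. -/
abbrev E (n : ℕ) := EuclideanSpace ℝ (Fin (n + 1))

/-- The last coordinate `y` of a point `z = (x, y) ∈ ℝ^{n+1}`. -/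
def ycoord {n : ℕ} (z : E n) : ℝ := z (Fin.last n)

/-- The open upper half-space `ℝ₊^{n+1}`. -/
def upperHalf (n : ℕ) : Set (E n) := {z | 0 < ycoord z}

/-- The open upper half-ball `B_r⁺`. -/
def Bplus (n : ℕ) (r : ℝ) : Set (E n) := {z | 0 < ycoord z ∧ ‖z‖ < r}

/-- The upper hemisphere `(∂B_r)⁺`. -/
def sphPlus (n : ℕ) (r : ℝ) : Set (E n) := {z | 0 < ycoord z ∧ ‖z‖ = r}

/-- The point `(x, y) ∈ ℝ^{n+1}` built from `x ∈ ℝⁿ` and `y ∈ ℝ`. -/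
def pt {n : ℕ} (x : EuclideanSpace ℝ (Fin n)) (y : ℝ) : E n :=
  (EuclideanSpace.equiv (Fin (n + 1)) ℝ).symm (Fin.snoc (fun i => x i) y)

/-- The unit vector `e_{n+1}` in the `y`-direction. -/
def eY (n : ℕ) : E n := EuclideanSpace.single (Fin.last n) (1 : ℝ)

/-- The partial derivative `∂_y u` in the `y`-direction. -/
def partialY {n : ℕ} (u : E n → ℝ) (z : E n) : ℝ := fderiv ℝ u z (eY n)

/-- The Euclidean Laplacian `Δu = ∑ ∂²u/∂z_i²`. -/
def lap {n : ℕ} (u : E n → ℝ) (z : E n) : ℝ :=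
  ∑ i : Fin (n + 1),
    fderiv ℝ (fun w => fderiv ℝ u w (EuclideanSpace.single i (1 : ℝ))) z
      (EuclideanSpace.single i (1 : ℝ))

/-- A C¹ function with compact support contained in `{z : ‖z‖ ≤ r, y > 0}`. -/
def IsTestFn (n : ℕ) (r : ℝ) (φ : E n → ℝ) : Prop :=
  ContDiff ℝ 1 φ ∧ tsupport φ ⊆ {z : E n | ‖z‖ ≤ r ∧ 0 < ycoord z}

/-- The `y^a`-weighted Sobolev energy `∫_{B_r⁺} (|∇u|² + u²) y^a dz`. -/
def wInt (n : ℕ) (a : ℝ) (u : E n → ℝ) (r : ℝ) : ℝ≥0∞ :=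
  ∫⁻ z in Bplus n r, ENNReal.ofReal ((‖gradient u z‖ ^ 2 + (u z) ^ 2) * (ycoord z) ^ a)

/-- Membership in `H^{1,a}(ℝ₊^{n+1})`: locally finite weighted Sobolev norm. -/
def memH1 (n : ℕ) (a : ℝ) (u : E n → ℝ) : Prop := ∀ r > 0, wInt n a u r < ⊤

/-- Membership in `H̃^{1,a}(ℝ₊^{n+1})`: finite local weighted norm together with
approximability by C¹ functions compactly supported away from the boundary. -/
def memH1T (n : ℕ) (a : ℝ) (u : E n → ℝ) : Prop :=
  memH1 n a u ∧ ∀ r > 0, ∃ φ : ℕ → E n → ℝ, (∀ k, IsTestFn n r (φ k)) ∧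
    Tendsto (fun k => wInt n a (fun z => u z - φ k z) r) atTop (nhds 0)

/-!
Along each vertical line the quotient `ρ(x, t) / t` is nonincreasing in `t`: its derivative is
`(t ∂_y ρ - ρ) / t² ≤ (t |∇ρ| - ρ) / t² ≤ 0`. Since it tends to `1` as `t → 0⁺`, it is at most `1`.
-/

theorem antitoneOn_div_self_of_mul_deriv_le {f f' : ℝ → ℝ}
    (hf : ∀ t > 0, HasDerivAt f (f' t) t) (hbound : ∀ t > 0, t * f' t ≤ f t) :
    AntitoneOn (fun t => f t / t) (Ioi 0) := by
  have hquot : ∀ t > 0, HasDerivAt (fun t => f t / t) ((f' t * t - f t * 1) / t ^ 2) t :=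
    fun t ht => (hf t ht).div (hasDerivAt_id t) ht.ne'
  refine antitoneOn_of_hasDerivWithinAt_nonpos (f' := fun t => (f' t * t - f t * 1) / t ^ 2)
    (convex_Ioi 0)
    (fun t ht => (hquot t ht).continuousAt.continuousWithinAt) (fun t ht => ?_) (fun t ht => ?_)
  · rw [interior_Ioi] at ht ⊢
    exact (hquot t ht).hasDerivWithinAt
  · rw [interior_Ioi] at ht
    exact div_nonpos_of_nonpos_of_nonneg (by linarith [hbound t ht]) (sq_nonneg t)

theorem le_self_of_mul_deriv_le {f f' : ℝ → ℝ}
    (hf : ∀ t > 0, HasDerivAt f (f' t) t) (hbound : ∀ t > 0, t * f' t ≤ f t)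
    (hlim : Tendsto (fun t => f t / t) (𝓝[>] 0) (𝓝 1)) {y : ℝ} (hy : 0 < y) : f y ≤ y := by
  have hanti := antitoneOn_div_self_of_mul_deriv_le hf hbound
  have hquot : f y / y ≤ 1 := by
    refine ge_of_tendsto hlim ?_
    filter_upwards [Ioo_mem_nhdsGT hy] with s hs
    exact hanti hs.1 (mem_Ioi.2 hy) hs.2.le
  exact (div_le_one hy).mp hquot

theorem fderiv_apply_le_norm_gradient {F : Type*} [NormedAddCommGroup F] [InnerProductSpace ℝ F]
    [CompleteSpace F] (f : F → ℝ) (w v : F) : fderiv ℝ f w v ≤ ‖gradient f w‖ * ‖v‖ := by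
  rw [← inner_gradient_left]
  exact real_inner_le_norm _ _

lemma ycoord_pt {n : ℕ} (x : EuclideanSpace ℝ (Fin n)) (t : ℝ) : ycoord (pt x t) = t := by
  simp [ycoord, pt, Fin.snoc_last]

lemma pt_eq_add_smul_eY {n : ℕ} (x : EuclideanSpace ℝ (Fin n)) (t : ℝ) :
    pt x t = pt x 0 + t • eY n := by
  ext i
  refine Fin.lastCases ?_ (fun j => ?_) i
  · simp [pt, eY, Fin.snoc_last]
  · simp [pt, eY, Fin.snoc_castSucc, (Fin.castSucc_lt_last j).ne]

lemma hasDerivAt_pt {n : ℕ} (x : EuclideanSpace ℝ (Fin n)) (t : ℝ) :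
    HasDerivAt (pt x) (eY n) t := by
  have := ((hasDerivAt_id t).smul_const (eY n)).const_add (pt x 0)
  simpa [← pt_eq_add_smul_eY] using this

lemma pt_castSucc_ycoord {n : ℕ} (z : E n) :
    pt (WithLp.toLp 2 (fun i => z (Fin.castSucc i))) (ycoord z) = z := by
  ext i
  refine Fin.lastCases ?_ (fun j => ?_) i
  · simp [pt, ycoord, Fin.snoc_last]
  · simp [pt, Fin.snoc_castSucc]

lemma isOpen_upperHalf (n : ℕ) : IsOpen (upperHalf n) :=
  isOpen_lt continuous_const (by unfold ycoord; fun_prop)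

lemma norm_eY (n : ℕ) : ‖eY n‖ = 1 := by
  simp [eY]

theorem gradient_bound_implies_rho_le_y_general
    (n : ℕ) (ρ : E n → ℝ)
    (hC1 : ContDiffOn ℝ 1 ρ (upperHalf n))
    (hgrad : ∀ z ∈ upperHalf n, ycoord z * ‖gradient ρ z‖ ≤ ρ z)
    (hlim : ∀ x : EuclideanSpace ℝ (Fin n),
      Tendsto (fun y => ρ (pt x y) / y) (nhdsWithin 0 (Set.Ioi 0)) (nhds 1)) :
    ∀ z ∈ upperHalf n, ρ z ≤ ycoord z := by
  intro z hz
  set x : EuclideanSpace ℝ (Fin n) := WithLp.toLp 2 (fun i => z (Fin.castSucc i))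
  have hmem : ∀ t > 0, pt x t ∈ upperHalf n := fun t ht => by
    rwa [upperHalf, mem_ofPred_eq, ycoord_pt]
  have hderiv : ∀ t > 0, HasDerivAt (fun s => ρ (pt x s)) (fderiv ℝ ρ (pt x t) (eY n)) t :=
    fun t ht => ((hC1.contDiffAt ((isOpen_upperHalf n).mem_nhds (hmem t ht))).differentiableAt
      one_ne_zero).hasFDerivAt.comp_hasDerivAt t (hasDerivAt_pt x t)
  have hbound : ∀ t > 0, t * fderiv ℝ ρ (pt x t) (eY n) ≤ ρ (pt x t) := fun t ht =>
    calc t * fderiv ℝ ρ (pt x t) (eY n) ≤ t * ‖gradient ρ (pt x t)‖ := by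
          gcongr
          simpa [norm_eY] using fderiv_apply_le_norm_gradient ρ (pt x t) (eY n)
      _ ≤ ρ (pt x t) := by simpa [ycoord_pt] using hgrad _ (hmem t ht)
  simpa [x, pt_castSucc_ycoord] using le_self_of_mul_deriv_le hderiv hbound (hlim x) hz

/-- if `ρ > 0` satisfies `y|∇ρ| ≤ ρ` and `lim_{y→0⁺} ρ(x,y)/y = 1`, then
`ρ(x,y) ≤ y` on the upper half-space. -/
theorem gradient_bound_implies_rho_le_y
    (n : ℕ) (hn : 1 ≤ n) (ρ : E n → ℝ)
    (hpos : ∀ z ∈ upperHalf n, 0 < ρ z)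
    (hC1 : ContDiffOn ℝ 1 ρ (upperHalf n))
    (hgrad : ∀ z ∈ upperHalf n, ycoord z * ‖gradient ρ z‖ ≤ ρ z)
    (hlim : ∀ x : EuclideanSpace ℝ (Fin n),
      Tendsto (fun y => ρ (pt x y) / y) (nhdsWithin 0 (Set.Ioi 0)) (nhds 1)) :
    ∀ z ∈ upperHalf n, ρ z ≤ ycoord z :=
  gradient_bound_implies_rho_le_y_general n ρ hC1 hgrad hlim

end
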